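/- arXiv:2201.12118 — 5 statements merged into one kernel-verified Lean document; each statement's English description precedes it below -/
import Mathlib

section
/- Let ω̃ : ℝ → [0,∞), and suppose there exist c, δ, κ > 0 and α ∈ ℝ with ω̃(t) = c t^α e^{δt}(1 + O(e^{-κt})) as t → +∞. Let t ↦ η_t be a map from [0,∞) to (0,1] with η_t e^{κt} → +∞. Then as t → +∞, ω̃(t) - ω̃(t - η_t) = c t^α e^{δt} (1 - e^{-δη_t}) (1 + (1/η_t) O_δ(e^{-κt}) + O_{α,δ}(1/t)). -/
open Filter Real

lemma aux_rpow_le (β : ℝ) {x t : ℝ} (ht : 0 < t) (h1 : t/2 ≤ x) (h2 : x ≤ t) :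
    x ^ β ≤ 2 ^ |β| * t ^ β := by
  have hx : 0 < x := lt_of_lt_of_le (by linarith) h1
  rcases le_or_gt 0 β with hβ | hβ
  · have h21 : (1:ℝ) ≤ 2 ^ |β| := by
      rw [show (1:ℝ) = 2 ^ (0:ℝ) by simp]
      exact Real.rpow_le_rpow_of_exponent_le one_le_two (abs_nonneg β)
    calc x ^ β ≤ t ^ β := Real.rpow_le_rpow hx.le h2 hβ
      _ ≤ 2 ^ |β| * t ^ β := le_mul_of_one_le_left (Real.rpow_nonneg ht.le β) h21
  · have : x ^ β ≤ (t/2) ^ β := Real.rpow_le_rpow_of_nonpos (by linarith) h1 hβ.le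
    have hd : (t/2 : ℝ) ^ β = 2 ^ |β| * t ^ β := by
      rw [abs_of_neg hβ, Real.div_rpow ht.le (by norm_num), Real.rpow_neg (by norm_num)]
      field_simp
    linarith [this, hd.ge]

lemma aux_mvt (α : ℝ) {t e : ℝ} (ht : 2 ≤ t) (he0 : 0 < e) (he1 : e ≤ 1) :
    |t ^ α - (t - e) ^ α| ≤ |α| * 2 ^ |α - 1| * t ^ (α - 1) * e := by
  set s : Set ℝ := Set.Icc (t - e) t with hs
  have hmem : ∀ x ∈ s, t/2 ≤ x ∧ x ≤ t := by
    rintro x ⟨hx1, hx2⟩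
    exact ⟨by linarith, hx2⟩
  have ht0 : (0:ℝ) < t := by linarith
  have hderiv : ∀ x ∈ s, HasDerivWithinAt (fun y : ℝ => y ^ α) (α * x ^ (α - 1)) s x := by
    intro x hx
    have hx0 : x ≠ 0 := by
      have h1 := (hmem x hx).1
      have : (0:ℝ) < x := by linarith
      exact this.ne'
    exact (Real.hasDerivAt_rpow_const (Or.inl hx0)).hasDerivWithinAt
  have hbound : ∀ x ∈ s, ‖α * x ^ (α - 1)‖ ≤ |α| * (2 ^ |α - 1| * t ^ (α - 1)) := by
    intro x hx
    obtain ⟨h1, h2⟩ := hmem x hx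
    have hx0 : (0:ℝ) < x := by linarith
    rw [norm_mul, Real.norm_eq_abs, Real.norm_eq_abs, abs_of_nonneg (Real.rpow_nonneg hx0.le _)]
    exact mul_le_mul_of_nonneg_left (aux_rpow_le (α - 1) ht0 h1 h2) (abs_nonneg α)
  have := Convex.norm_image_sub_le_of_norm_hasDerivWithin_le hderiv hbound
    (convex_Icc _ _) (Set.right_mem_Icc.2 (by linarith)) (Set.left_mem_Icc.2 (by linarith))
  rw [Real.norm_eq_abs, Real.norm_eq_abs, abs_sub_comm, show t - e - t = -e by ring,
    abs_neg, abs_of_nonneg he0.le] at this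
  calc |t ^ α - (t - e) ^ α| ≤ |α| * (2 ^ |α - 1| * t ^ (α - 1)) * e := this
    _ = |α| * 2 ^ |α - 1| * t ^ (α - 1) * e := by ring

lemma aux_convex {δ e : ℝ} (he0 : 0 < e) (he1 : e ≤ 1) :
    e * (1 - Real.exp (-δ)) ≤ 1 - Real.exp (-(δ * e)) := by
  have := convexOn_exp.2 (Set.mem_univ (-δ)) (Set.mem_univ (0:ℝ)) he0.le
    (by linarith : (0:ℝ) ≤ 1 - e) (by ring)
  simp only [smul_eq_mul, mul_zero, add_zero, Real.exp_zero, mul_one] at this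
  have h' : Real.exp (-(δ * e)) ≤ e * Real.exp (-δ) + (1 - e) := by
    rw [show -(δ * e) = e * (-δ) by ring]; exact this
  linarith

set_option maxHeartbeats 1000000 in
/-- Lemma 2.2 (2): slice asymptotics under assumption (ET), general `α`. -/
theorem slice_asymptotics_ET (w : ℝ → ℝ) (hw : ∀ t, 0 ≤ w t)
    (c δ κ α : ℝ) (hc : 0 < c) (hδ : 0 < δ) (hκ : 0 < κ)
    (hET : ∃ C : ℝ, ∃ t0 : ℝ, ∀ t ≥ t0,
      |w t - c * t ^ α * Real.exp (δ * t)| ≤ C * t ^ α * Real.exp ((δ - κ) * t))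
    (η : ℝ → ℝ) (hη : ∀ t ≥ (0:ℝ), η t ∈ Set.Ioc (0:ℝ) 1)
    (hηlim : Tendsto (fun t : ℝ => η t * Real.exp (κ * t)) atTop atTop) :
    ∃ C' : ℝ, ∃ t1 : ℝ, ∀ t ≥ t1,
      |(w t - w (t - η t)) - c * t ^ α * Real.exp (δ * t) * (1 - Real.exp (-δ * η t))|
        ≤ c * t ^ α * Real.exp (δ * t) * (1 - Real.exp (-δ * η t)) *
            (C' * (Real.exp (-κ * t) / η t + 1 / t)) := by
  obtain ⟨C, t0, hC⟩ := hET
  have hq : (0:ℝ) < 1 - Real.exp (-δ) := by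
    have : Real.exp (-δ) < 1 := by
      rw [← Real.exp_zero]
      exact Real.exp_lt_exp.2 (by linarith)
    linarith
  set q : ℝ := 1 - Real.exp (-δ) with hq_def
  set K₁ : ℝ := 2 ^ |α| with hK₁
  set K₂ : ℝ := 2 ^ |α - 1| with hK₂
  set D1 : ℝ := |C| * (1 + K₁ * Real.exp |δ - κ|) with hD1
  set D2 : ℝ := c * |α| * K₂ with hD2
  have hD1n : 0 ≤ D1 := by positivity
  have hD2n : 0 ≤ D2 := by positivity
  set Dm : ℝ := max D1 D2 with hDm
  have hDmn : 0 ≤ Dm := le_trans hD1n (le_max_left _ _)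
  have hC'n : 0 ≤ Dm / (c * q) := div_nonneg hDmn (by positivity)
  refine ⟨Dm / (c * q), max (t0 + 1) 2, fun t ht => ?_⟩
  have ht2 : (2:ℝ) ≤ t := le_trans (le_max_right _ _) ht
  have ht0' : t0 + 1 ≤ t := le_trans (le_max_left _ _) ht
  have htp : (0:ℝ) < t := by linarith
  have hmem := hη t (by linarith)
  rw [Set.mem_Ioc] at hmem
  obtain ⟨he0, he1⟩ : 0 < η t ∧ η t ≤ 1 := hmem
  set e : ℝ := η t with he_def
  have hte : (0:ℝ) < t - e := by linarith
  have hte2 : t/2 ≤ t - e := by linarith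
  have hTp : (0:ℝ) < t ^ α := Real.rpow_pos_of_pos htp α
  have hteα : (0:ℝ) ≤ (t - e) ^ α := Real.rpow_nonneg hte.le α
  set X : ℝ := t ^ α * Real.exp ((δ - κ) * t) with hX
  set Y : ℝ := t ^ (α - 1) * Real.exp (δ * t) * e with hY
  have hXp : 0 < X := by positivity
  have hYp : 0 < Y := by positivity
  -- error bound at t
  have h1 : |w t - c * t ^ α * Real.exp (δ * t)| ≤ |C| * X := by
    calc |w t - c * t ^ α * Real.exp (δ * t)| ≤ C * t ^ α * Real.exp ((δ - κ) * t) :=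
          hC t (by linarith)
      _ = C * X := by rw [hX]; ring
      _ ≤ |C| * X := mul_le_mul_of_nonneg_right (le_abs_self C) hXp.le
  -- error bound at t - e
  have h2 : |w (t - e) - c * (t - e) ^ α * Real.exp (δ * (t - e))|
      ≤ (|C| * (K₁ * Real.exp |δ - κ|)) * X := by
    have hA : (t - e) ^ α ≤ K₁ * t ^ α := aux_rpow_le α htp hte2 (by linarith)
    have hE : Real.exp ((δ - κ) * (t - e)) ≤ Real.exp |δ - κ| * Real.exp ((δ - κ) * t) := by
      rw [← Real.exp_add]
      apply Real.exp_le_exp.2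
      have h' : (-(δ - κ)) * e ≤ |δ - κ| * e :=
        mul_le_mul_of_nonneg_right (neg_le_abs (δ - κ)) he0.le
      have h'' : |δ - κ| * e ≤ |δ - κ| := by
        nlinarith [abs_nonneg (δ - κ)]
      nlinarith
    have hprod : (t - e) ^ α * Real.exp ((δ - κ) * (t - e))
        ≤ (K₁ * t ^ α) * (Real.exp |δ - κ| * Real.exp ((δ - κ) * t)) :=
      mul_le_mul hA hE (Real.exp_pos _).le (by positivity)
    calc |w (t - e) - c * (t - e) ^ α * Real.exp (δ * (t - e))|
        ≤ C * (t - e) ^ α * Real.exp ((δ - κ) * (t - e)) := hC (t - e) (by linarith)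
      _ = C * ((t - e) ^ α * Real.exp ((δ - κ) * (t - e))) := by ring
      _ ≤ |C| * ((t - e) ^ α * Real.exp ((δ - κ) * (t - e))) :=
          mul_le_mul_of_nonneg_right (le_abs_self C)
            (mul_nonneg hteα (Real.exp_pos _).le)
      _ ≤ |C| * ((K₁ * t ^ α) * (Real.exp |δ - κ| * Real.exp ((δ - κ) * t))) :=
          mul_le_mul_of_nonneg_left hprod (abs_nonneg C)
      _ = (|C| * (K₁ * Real.exp |δ - κ|)) * X := by rw [hX]; ring
  -- main-term comparison
  have hsplit : Real.exp (δ * t) * Real.exp (-(δ * e)) = Real.exp (δ * (t - e)) := by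
    rw [← Real.exp_add]; congr 1; ring
  have h3 : |c * t ^ α * Real.exp (δ * t) * Real.exp (-(δ * e))
        - c * (t - e) ^ α * Real.exp (δ * (t - e))| ≤ D2 * Y := by
    have heq : c * t ^ α * Real.exp (δ * t) * Real.exp (-(δ * e))
        - c * (t - e) ^ α * Real.exp (δ * (t - e))
        = c * Real.exp (δ * (t - e)) * (t ^ α - (t - e) ^ α) := by
      rw [← hsplit]; ring
    rw [heq, abs_mul, abs_of_nonneg (by positivity : (0:ℝ) ≤ c * Real.exp (δ * (t - e)))]
    have hm := aux_mvt α ht2 he0 he1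
    have hee : Real.exp (δ * (t - e)) ≤ Real.exp (δ * t) :=
      Real.exp_le_exp.2 (by nlinarith [mul_pos hδ he0])
    calc c * Real.exp (δ * (t - e)) * |t ^ α - (t - e) ^ α|
        ≤ (c * Real.exp (δ * t)) * (|α| * 2 ^ |α - 1| * t ^ (α - 1) * e) := by
          apply mul_le_mul (mul_le_mul_of_nonneg_left hee hc.le) hm (abs_nonneg _) (by positivity)
      _ = D2 * Y := by rw [hD2, hY, hK₂]; ring
  -- triangle inequality
  have htri : |(w t - w (t - e)) - c * t ^ α * Real.exp (δ * t) * (1 - Real.exp (-δ * e))|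
      ≤ D1 * X + D2 * Y := by
    have hkey : (w t - w (t - e)) - c * t ^ α * Real.exp (δ * t) * (1 - Real.exp (-δ * e))
        = ((w t - c * t ^ α * Real.exp (δ * t))
          - (w (t - e) - c * (t - e) ^ α * Real.exp (δ * (t - e))))
          + (c * t ^ α * Real.exp (δ * t) * Real.exp (-(δ * e))
            - c * (t - e) ^ α * Real.exp (δ * (t - e))) := by
      rw [show -δ * e = -(δ * e) by ring]; ring
    rw [hkey]
    calc |_ + _| ≤ |(w t - c * t ^ α * Real.exp (δ * t))
          - (w (t - e) - c * (t - e) ^ α * Real.exp (δ * (t - e)))|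
          + |c * t ^ α * Real.exp (δ * t) * Real.exp (-(δ * e))
            - c * (t - e) ^ α * Real.exp (δ * (t - e))| := abs_add_le _ _
      _ ≤ (|w t - c * t ^ α * Real.exp (δ * t)|
          + |w (t - e) - c * (t - e) ^ α * Real.exp (δ * (t - e))|)
          + |c * t ^ α * Real.exp (δ * t) * Real.exp (-(δ * e))
            - c * (t - e) ^ α * Real.exp (δ * (t - e))| := by
          have := abs_sub (w t - c * t ^ α * Real.exp (δ * t))
            (w (t - e) - c * (t - e) ^ α * Real.exp (δ * (t - e)))
          linarith
      _ ≤ (|C| * X + (|C| * (K₁ * Real.exp |δ - κ|)) * X) + D2 * Y := by linarith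
      _ = D1 * X + D2 * Y := by rw [hD1]; ring
  -- final comparison with the RHS
  have hQ1 : e * q ≤ 1 - Real.exp (-δ * e) := by
    rw [show -δ * e = -(δ * e) by ring]
    exact aux_convex he0 he1
  have hXexp : X = t ^ α * Real.exp (δ * t) * Real.exp (-κ * t) := by
    rw [hX, mul_assoc, ← Real.exp_add]; congr 2; ring
  have hYdiv : t ^ (α - 1) = t ^ α / t := by
    rw [Real.rpow_sub htp, Real.rpow_one]
  have hXY : X + Y = (t ^ α * Real.exp (δ * t)) * (e * (Real.exp (-κ * t) / e + 1 / t)) := by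
    rw [hXexp, hY, hYdiv]
    field_simp
  have hbn : (0:ℝ) ≤ (Dm / (c * q)) * (Real.exp (-κ * t) / e + 1 / t) := by
    apply mul_nonneg hC'n
    have : (0:ℝ) ≤ Real.exp (-κ * t) / e := div_nonneg (Real.exp_pos _).le he0.le
    have : (0:ℝ) ≤ 1 / t := by positivity
    positivity
  calc |(w t - w (t - e)) - c * t ^ α * Real.exp (δ * t) * (1 - Real.exp (-δ * e))|
      ≤ D1 * X + D2 * Y := htri
    _ ≤ Dm * (X + Y) := by
        nlinarith [mul_le_mul_of_nonneg_right (le_max_left D1 D2) hXp.le,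
          mul_le_mul_of_nonneg_right (le_max_right D1 D2) hYp.le]
    _ = c * t ^ α * Real.exp (δ * t) * (e * q)
        * ((Dm / (c * q)) * (Real.exp (-κ * t) / e + 1 / t)) := by
        rw [hXY]
        field_simp
    _ ≤ c * t ^ α * Real.exp (δ * t) * (1 - Real.exp (-δ * e))
        * ((Dm / (c * q)) * (Real.exp (-κ * t) / e + 1 / t)) := by
        apply mul_le_mul_of_nonneg_right _ hbn
        exact mul_le_mul_of_nonneg_left hQ1 (by positivity)
end

section
/- Let ω̃ : ℝ → [0,∞), and suppose there exist c, δ, κ > 0 with ω̃(t) = c e^{δt}(1 + O(e^{-κt})) as t → +∞ (the case α = 0). Let t ↦ η_t be a map from [0,∞) to (0,1] with η_t e^{κt} → +∞. Then as t → +∞, ω̃(t) - ω̃(t - η_t) = c e^{δt}(1 - e^{-δη_t})(1 + (1/η_t) O_δ(e^{-κt})). -/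
open Filter Real

/-- Lemma 2.2 (2), special case `α = 0`: slice asymptotics under assumption (ET). -/
theorem slice_asymptotics_ET_alpha_zero (w : ℝ → ℝ) (hw : ∀ t, 0 ≤ w t)
    (c δ κ : ℝ) (hc : 0 < c) (hδ : 0 < δ) (hκ : 0 < κ)
    (hET : ∃ C : ℝ, ∃ t0 : ℝ, ∀ t ≥ t0,
      |w t - c * Real.exp (δ * t)| ≤ C * Real.exp ((δ - κ) * t))
    (η : ℝ → ℝ) (hη : ∀ t ≥ (0:ℝ), η t ∈ Set.Ioc (0:ℝ) 1)
    (hηlim : Tendsto (fun t : ℝ => η t * Real.exp (κ * t)) atTop atTop) :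
    ∃ C' : ℝ, ∃ t1 : ℝ, ∀ t ≥ t1,
      |(w t - w (t - η t)) - c * Real.exp (δ * t) * (1 - Real.exp (-δ * η t))|
        ≤ c * Real.exp (δ * t) * (1 - Real.exp (-δ * η t)) *
            (C' * (Real.exp (-κ * t) / η t)) := by
  obtain ⟨C, t0, hC⟩ := hET
  set C0 : ℝ := max C 0 with hC0def
  have hC0 : 0 ≤ C0 := le_max_right _ _
  have hCb : ∀ t ≥ t0, |w t - c * Real.exp (δ * t)| ≤ C0 * Real.exp ((δ - κ) * t) := by
    intro t ht
    exact (hC t ht).trans (mul_le_mul_of_nonneg_right (le_max_left _ _) (Real.exp_pos _).le)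
  set A : ℝ := C0 * (1 + Real.exp κ) with hAdef
  have hA : 0 ≤ A := mul_nonneg hC0 (by positivity)
  refine ⟨A * Real.exp δ / (c * δ), max (t0 + 1) 1, ?_⟩
  intro t ht
  have ht1 : (1:ℝ) ≤ t := le_trans (le_max_right _ _) ht
  have ht0 : t0 + 1 ≤ t := le_trans (le_max_left _ _) ht
  obtain ⟨hη0, hη1⟩ := hη t (by linarith)
  have htη : t0 ≤ t - η t := by linarith
  have h1 := hCb t (by linarith)
  have h2 := hCb (t - η t) htη
  set S : ℝ := 1 - Real.exp (-δ * η t) with hSdef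
  set E : ℝ := Real.exp ((δ - κ) * t) with hEdef
  have hEpos : 0 < E := Real.exp_pos _
  -- rewrite the main term as a difference
  have key : c * Real.exp (δ * t) * S = c * Real.exp (δ * t) - c * Real.exp (δ * (t - η t)) := by
    have h : δ * t + (-δ * η t) = δ * (t - η t) := by ring
    rw [hSdef, mul_sub, mul_one, mul_assoc, ← Real.exp_add, h]
  -- bound on exp ((δ-κ)*(t - η t))
  have hexp2 : Real.exp ((δ - κ) * (t - η t)) ≤ E * Real.exp κ := by
    rw [hEdef, ← Real.exp_add]
    apply Real.exp_le_exp.2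
    have h1' : (κ - δ) * η t ≤ κ := by
      have : (κ - δ) * η t ≤ κ * η t := by nlinarith
      nlinarith
    nlinarith
  -- step A : triangle inequality bound
  have stepA : |(w t - w (t - η t)) - c * Real.exp (δ * t) * S| ≤ A * E := by
    rw [key]
    have heq : (w t - w (t - η t)) - (c * Real.exp (δ * t) - c * Real.exp (δ * (t - η t)))
        = (w t - c * Real.exp (δ * t)) - (w (t - η t) - c * Real.exp (δ * (t - η t))) := by ring
    rw [heq]
    calc |(w t - c * Real.exp (δ * t)) - (w (t - η t) - c * Real.exp (δ * (t - η t)))|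
        ≤ |w t - c * Real.exp (δ * t)| + |w (t - η t) - c * Real.exp (δ * (t - η t))| :=
          abs_sub _ _
      _ ≤ C0 * E + C0 * (E * Real.exp κ) := by
          gcongr
          exact h2.trans (by gcongr)
      _ = A * E := by rw [hAdef]; ring
  -- key analytic inequality : δ * η t ≤ S * exp δ
  have hSpos : 0 < S := by
    rw [hSdef]
    have : Real.exp (-δ * η t) < 1 := Real.exp_lt_one_iff.2 (by nlinarith)
    linarith
  have hSδ : δ * η t ≤ S * Real.exp δ := by
    have h1' : δ * η t + 1 ≤ Real.exp (δ * η t) := Real.add_one_le_exp _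
    have h2' : S * Real.exp (δ * η t) = Real.exp (δ * η t) - 1 := by
      rw [hSdef, sub_mul, one_mul, ← Real.exp_add]
      simp
    have h3' : Real.exp (δ * η t) ≤ Real.exp δ := Real.exp_le_exp.2 (by nlinarith)
    calc δ * η t ≤ Real.exp (δ * η t) - 1 := by linarith
      _ = S * Real.exp (δ * η t) := h2'.symm
      _ ≤ S * Real.exp δ := by gcongr
  -- identify the RHS
  have hRHS : c * Real.exp (δ * t) * S * (A * Real.exp δ / (c * δ) * (Real.exp (-κ * t) / η t))
      = A * E * (S * Real.exp δ / (δ * η t)) := by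
    rw [hEdef, show (δ - κ) * t = δ * t + -κ * t by ring, Real.exp_add]
    field_simp
  rw [hRHS]
  refine stepA.trans ?_
  have hq : (1:ℝ) ≤ S * Real.exp δ / (δ * η t) :=
    (one_le_div (by positivity)).2 hSδ
  nlinarith [mul_le_mul_of_nonneg_left hq (mul_nonneg hA hEpos.le)]
end

section
/- Let N > 0, ε > 0, τ > 0 with τ ≥ 2ε, let ψ ≥ 1 with τ = τ'/ψ where τ' = τψ, and let x, y ∈ ℝ and k, n ≥ 1 be integers. If (k-1)ε < x ≤ kε, (nτ + kε) - τ < y ≤ nτ + kε - ε, and k ≤ ⌊(N - nτ)/ε⌋ + 1, then 0 < x ≤ y ≤ N, (k-1)ε < x ≤ kε, and (n-1)τ < y - x ≤ nτ. -/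
open Filter Real

/-- Lemma 3.2, minoration direction: the system (10) implies the system (8). -/
theorem index_separation_minoration
    (N ε τ ψ x y : ℝ) (k n : ℕ)
    (hN : 0 < N) (hε : 0 < ε) (hτ : 0 < τ) (hτε : 2 * ε ≤ τ) (hψ : 1 ≤ ψ)
    (hk : 1 ≤ k) (hn : 1 ≤ n)
    (hx1 : ((k : ℝ) - 1) * ε < x) (hx2 : x ≤ (k : ℝ) * ε)
    (hy1 : ((n : ℝ) * τ + (k : ℝ) * ε) - τ < y)
    (hy2 : y ≤ (n : ℝ) * τ + (k : ℝ) * ε - ε)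
    (hkM : (k : ℝ) ≤ (⌊(N - (n : ℝ) * τ) / ε⌋ : ℝ) + 1) :
    0 < x ∧ x ≤ y ∧ y ≤ N ∧
      ((k : ℝ) - 1) * ε < x ∧ x ≤ (k : ℝ) * ε ∧
      ((n : ℝ) - 1) * τ < y - x ∧ y - x ≤ (n : ℝ) * τ := by
  have hk1 : (1 : ℝ) ≤ (k : ℝ) := by exact_mod_cast hk
  have hn1 : (1 : ℝ) ≤ (n : ℝ) := by exact_mod_cast hn
  have hfl : (⌊(N - (n : ℝ) * τ) / ε⌋ : ℝ) ≤ (N - (n : ℝ) * τ) / ε :=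
    Int.floor_le _
  have hkle : (k : ℝ) * ε ≤ N - (n : ℝ) * τ + ε := by
    have := (div_le_div_iff₀ hε hε).mp (le_refl ((N - (n : ℝ) * τ) / ε))
    nlinarith [mul_le_mul_of_nonneg_right hkM hε.le,
      mul_le_mul_of_nonneg_right hfl hε.le,
      div_mul_cancel₀ (N - (n : ℝ) * τ) hε.ne']
  refine ⟨by nlinarith, by nlinarith, by nlinarith, hx1, hx2, by nlinarith, by nlinarith⟩
end

section
/- Let 𝓔 be a locally finite subset of [0,∞) with weight function ω : 𝓔 → (0,∞), and write ω̃(t) = Σ_{x∈𝓔, x≤t} ω(x). Suppose there are constants c, δ > 0 and α ∈ ℝ with ω̃(t) ~ c t^α e^{δt} as t → ∞. For N ∈ ℕ let 𝓡_N = Σ_{x,y∈𝓔, x≤N, y≤N} ω(x)ω(y) Δ_{y-x} (a finite measure on ℝ, where Δ_z is the Dirac mass at z). Then as N → ∞, the measures (1/ω̃(N)²) 𝓡_N converge weak-star to the measure (δ/2) e^{-δ|t|} dt on ℝ. -/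
/-!
The normalised pair correlation measures `μ_t` have distribution functions
`μ_t (Iic u) = ∑_{x, y ≤ t, y - x ≤ u} ω x ω y / ω̃(t)²`. For `u ≥ 0` the weighted count equals
`∑_{x ≤ t - u} ω x ω̃(x + u) + ω̃(t) (ω̃(t) - ω̃(t - u))`. By (PA), `ω̃(x + u) ~ e^{δu} ω̃(x)`, and
since every single weight is `o(ω̃)`, `∑_{x ≤ s} ω x ω̃(x) ~ ω̃(s)² / 2`; summing these
asymptotics (a Cesàro argument) gives the limit `1 - e^{-δu} / 2`, the distribution function of
the Laplace law `(δ/2) e^{-δ|t|} dt`. Negative `u` follow from the symmetry `x ↔ y`. Convergence of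
the measures of all intervals `Ioc a b` then gives convergence of `∫ f dμ_t` for continuous
compactly supported `f`, by approximating `f` with step functions on a fine partition.
-/

open Filter Real MeasureTheory Set Topology Asymptotics

section VagueConvergence

variable {μ : Measure ℝ} [IsLocallyFiniteMeasure μ] {f : ℝ → ℝ}

theorem abs_intervalIntegral_sub_mul_measureReal_Ioc_le {a b η : ℝ} (hab : a ≤ b)
    (hf : IntervalIntegrable f μ a b) (hη : ∀ x ∈ Ioc a b, |f x - f b| ≤ η) :
    |∫ x in a..b, f x ∂μ - f b * μ.real (Ioc a b)| ≤ η * μ.real (Ioc a b) := by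
  have : ∫ x in a..b, f x ∂μ - f b * μ.real (Ioc a b) = ∫ x in Ioc a b, (f x - f b) ∂μ := by
    rw [intervalIntegral.integral_of_le hab,
      integral_sub hf.1 (integrableOn_const measure_Ioc_lt_top.ne), setIntegral_const,
      smul_eq_mul, mul_comm]
  rw [this]
  exact norm_setIntegral_le_of_norm_le_const (f := fun x => f x - f b) measure_Ioc_lt_top hη

theorem abs_intervalIntegral_sub_sum_mul_measureReal_Ioc_le {p : ℕ → ℝ} (hp : Monotone p)
    (hf : Continuous f) {η : ℝ} {n : ℕ}
    (hη : ∀ j < n, ∀ x ∈ Ioc (p j) (p (j + 1)), |f x - f (p (j + 1))| ≤ η) :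
    |∫ x in p 0..p n, f x ∂μ -
        ∑ j ∈ Finset.range n, f (p (j + 1)) * μ.real (Ioc (p j) (p (j + 1)))|
      ≤ η * μ.real (Ioc (p 0) (p n)) := by
  induction n with
  | zero => simp
  | succ n ih =>
    have hlast := abs_intervalIntegral_sub_mul_measureReal_Ioc_le (μ := μ) (hp n.le_succ)
      (hf.intervalIntegrable _ _) (hη n n.lt_succ_self)
    have hprev := ih fun j hj => hη j (hj.trans n.lt_succ_self)
    rw [← intervalIntegral.integral_add_adjacent_intervals (hf.intervalIntegrable _ _)
      (hf.intervalIntegrable _ _), Finset.sum_range_succ,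
      ← Ioc_union_Ioc_eq_Ioc (hp (Nat.zero_le n)) (hp n.le_succ),
      measureReal_union (Ioc_disjoint_Ioc_of_le le_rfl) measurableSet_Ioc
        measure_Ioc_lt_top.ne measure_Ioc_lt_top.ne]
    calc _ = |(∫ x in p 0..p n, f x ∂μ -
            ∑ j ∈ Finset.range n, f (p (j + 1)) * μ.real (Ioc (p j) (p (j + 1)))) +
          (∫ x in p n..p (n + 1), f x ∂μ - f (p (n + 1)) * μ.real (Ioc (p n) (p (n + 1))))| := by
          ring_nf
      _ ≤ _ := (abs_add_le _ _).trans (by linarith)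

theorem exists_monotone_partition {a b r : ℝ} (hab : a ≤ b) (hr : 0 < r) :
    ∃ (n : ℕ) (p : ℕ → ℝ), Monotone p ∧ p 0 = a ∧ p n = b ∧ ∀ j, p (j + 1) - p j < r := by
  obtain ⟨n, hn⟩ := exists_nat_gt ((b - a) / r)
  have hn0 : (0 : ℝ) < n := lt_of_le_of_lt (by positivity) hn
  refine ⟨n, fun j => a + j * ((b - a) / n), fun i j hij => by simp only; gcongr, by simp,
    by field_simp; ring, fun j => ?_⟩
  push_cast
  rw [show a + (j + 1) * ((b - a) / n) - (a + j * ((b - a) / n)) = (b - a) / n by ring,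
    div_lt_iff₀ hn0, mul_comm, ← div_lt_iff₀ hr]
  exact hn

theorem HasCompactSupport.exists_integral_eq_intervalIntegral (hf : HasCompactSupport f) :
    ∃ a b, a ≤ b ∧ ∀ ρ : Measure ℝ, ∫ x, f x ∂ρ = ∫ x in a..b, f x ∂ρ := by
  obtain ⟨R, hR⟩ := hf.isBounded.subset_closedBall 0
  have hab : -|R| - 1 ≤ |R| := by linarith [abs_nonneg R]
  refine ⟨-|R| - 1, |R|, hab, fun ρ => ?_⟩
  rw [intervalIntegral.integral_of_le hab]
  refine (setIntegral_eq_integral_of_forall_compl_eq_zero fun x hx => ?_).symm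
  refine image_eq_zero_of_notMem_tsupport fun hxs => hx ?_
  have := abs_le.1 ((mem_closedBall_zero_iff.1 (hR hxs)).trans (le_abs_self R))
  exact ⟨by linarith [this.1], this.2⟩

theorem tendsto_integral_of_tendsto_measureReal_Ioc {ι : Type*} {l : Filter ι}
    {μ : ι → Measure ℝ} [∀ i, IsLocallyFiniteMeasure (μ i)] {ν : Measure ℝ}
    [IsLocallyFiniteMeasure ν]
    (h : ∀ a b, a ≤ b → Tendsto (fun i => (μ i).real (Ioc a b)) l (𝓝 (ν.real (Ioc a b))))
    (hf : Continuous f) (hfs : HasCompactSupport f) :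
    Tendsto (fun i => ∫ x, f x ∂μ i) l (𝓝 (∫ x, f x ∂ν)) := by
  obtain ⟨a, b, hab, hinterval⟩ := hfs.exists_integral_eq_intervalIntegral
  simp_rw [hinterval]
  rw [Metric.tendsto_nhds]
  intro ε hε
  set B := ν.real (Ioc a b) + 1
  have hB : 0 < B := by positivity
  obtain ⟨r, hr, hfr⟩ := Metric.uniformContinuous_iff.1
    (hfs.uniformContinuous_of_continuous hf) (ε / (4 * B)) (by positivity)
  obtain ⟨n, p, hp, hp0, hpn, hmesh⟩ := exists_monotone_partition hab hr
  have hosc : ∀ j < n, ∀ x ∈ Ioc (p j) (p (j + 1)), |f x - f (p (j + 1))| ≤ ε / (4 * B) := by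
    intro j _ x hx
    refine (hfr ?_).le
    rw [Real.dist_eq, abs_lt]
    constructor <;> linarith [hx.1, hx.2, hmesh j]
  set S := fun ρ : Measure ℝ => ∑ j ∈ Finset.range n, f (p (j + 1)) * ρ.real (Ioc (p j) (p (j + 1)))
  have hS : Tendsto (fun i => S (μ i)) l (𝓝 (S ν)) :=
    tendsto_finsetSum _ fun j _ => (h _ _ (hp j.le_succ)).const_mul _
  filter_upwards [Metric.tendsto_nhds.1 hS (ε / 2) (by positivity),
    (h a b hab).eventually (eventually_lt_nhds (lt_add_one _))] with i hSi hμi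
  have hμ := abs_intervalIntegral_sub_sum_mul_measureReal_Ioc_le (μ := μ i) hp hf hosc
  have hν := abs_intervalIntegral_sub_sum_mul_measureReal_Ioc_le (μ := ν) hp hf hosc
  rw [hp0, hpn] at hμ hν
  have hμB : ε / (4 * B) * (μ i).real (Ioc a b) ≤ ε / 4 :=
    calc _ ≤ ε / (4 * B) * B := by gcongr
      _ = ε / 4 := by field_simp
  have hνB : ε / (4 * B) * ν.real (Ioc a b) ≤ ε / 4 :=
    calc _ ≤ ε / (4 * B) * B := by gcongr; linarith
      _ = ε / 4 := by field_simp
  rw [Real.dist_eq] at hSi ⊢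
  rw [abs_le] at hμ hν
  rw [abs_lt] at hSi ⊢
  constructor <;> linarith

theorem tendsto_measureReal_Iio_of_tendsto_measureReal_Iic {ι : Type*} {l : Filter ι}
    {μ : ι → Measure ℝ} [∀ i, IsFiniteMeasure (μ i)] {F : ℝ → ℝ} {u : ℝ}
    (hF : ContinuousWithinAt F (Iio u) u)
    (h : ∀ᶠ v in 𝓝[≤] u, Tendsto (fun i => (μ i).real (Iic v)) l (𝓝 (F v))) :
    Tendsto (fun i => (μ i).real (Iio u)) l (𝓝 (F u)) := by
  refine tendsto_order.2 ⟨fun b hb => ?_, fun b hb => ?_⟩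
  · obtain ⟨v, ⟨hbv, hv⟩, hvu⟩ := ((hF.eventually (lt_mem_nhds hb)).and
      (nhdsWithin_mono _ Iio_subset_Iic_self h)).and self_mem_nhdsWithin |>.exists
    filter_upwards [hv.eventually (lt_mem_nhds hbv)] with i hi
    exact hi.trans_le (measureReal_mono (Iic_subset_Iio.2 hvu))
  · filter_upwards [(h.self_of_nhdsWithin self_mem_Iic).eventually (gt_mem_nhds hb)] with i hi
    exact (measureReal_mono Iio_subset_Iic_self).trans_lt hi

end VagueConvergence

noncomputable def laplaceCDF (δ u : ℝ) : ℝ :=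
  if 0 ≤ u then 1 - exp (-δ * u) / 2 else exp (δ * u) / 2

noncomputable def laplaceMeasure (δ : ℝ) : Measure ℝ :=
  volume.withDensity fun t => ENNReal.ofReal (δ / 2 * exp (-δ * |t|))

instance (δ : ℝ) : IsLocallyFiniteMeasure (laplaceMeasure δ) :=
  IsLocallyFiniteMeasure.withDensity_ofReal (by fun_prop)

theorem hasDerivAt_laplaceCDF (δ x : ℝ) :
    HasDerivAt (laplaceCDF δ) (δ / 2 * exp (-δ * |x|)) x := by
  have hright {y : ℝ} (hy : 0 ≤ y) :
      HasDerivAt (fun u => 1 - exp (-δ * u) / 2) (δ / 2 * exp (-δ * |y|)) y := by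
    rw [abs_of_nonneg hy]
    exact ((((hasDerivAt_id' y).const_mul (-δ)).exp.div_const 2).const_sub 1).congr_deriv
      (by ring)
  have hleft {y : ℝ} (hy : y ≤ 0) :
      HasDerivAt (fun u => exp (δ * u) / 2) (δ / 2 * exp (-δ * |y|)) y := by
    rw [abs_of_nonpos hy, neg_mul_neg]
    exact (((hasDerivAt_id' y).const_mul δ).exp.div_const 2).congr_deriv (by ring)
  have hEqRight : EqOn (laplaceCDF δ) (fun u => 1 - exp (-δ * u) / 2) (Ici 0) :=
    fun u hu => if_pos hu
  have hEqLeft : EqOn (laplaceCDF δ) (fun u => exp (δ * u) / 2) (Iic 0) := by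
    intro u hu
    rcases (mem_Iic.1 hu).lt_or_eq with hu | rfl
    · exact if_neg (not_le.2 hu)
    · norm_num [laplaceCDF]
  rcases lt_trichotomy x 0 with hx | rfl | hx
  · exact (hleft hx.le).congr_of_eventuallyEq (hEqLeft.eventuallyEq_of_mem (Iic_mem_nhds hx))
  · have h := ((hleft le_rfl).hasDerivWithinAt.congr hEqLeft (hEqLeft self_mem_Iic)).union
      ((hright le_rfl).hasDerivWithinAt.congr hEqRight (hEqRight self_mem_Ici))
    rwa [Iic_union_Ici, hasDerivWithinAt_univ] at h
  · exact (hright hx.le).congr_of_eventuallyEq (hEqRight.eventuallyEq_of_mem (Ici_mem_nhds hx))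

theorem continuous_laplaceCDF (δ : ℝ) : Continuous (laplaceCDF δ) :=
  continuous_iff_continuousAt.2 fun x => (hasDerivAt_laplaceCDF δ x).continuousAt

theorem laplaceMeasure_real_Ioc {δ : ℝ} (hδ : 0 ≤ δ) {a b : ℝ} (hab : a ≤ b) :
    (laplaceMeasure δ).real (Ioc a b) = laplaceCDF δ b - laplaceCDF δ a := by
  have hcont : Continuous fun t => δ / 2 * exp (-δ * |t|) := by fun_prop
  rw [measureReal_def, laplaceMeasure, withDensity_apply _ measurableSet_Ioc,
    ← ofReal_integral_eq_lintegral_ofReal hcont.integrableOn_Ioc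
      (ae_of_all _ fun t => by positivity),
    ENNReal.toReal_ofReal (setIntegral_nonneg measurableSet_Ioc fun t _ => by positivity),
    ← intervalIntegral.integral_of_le hab,
    intervalIntegral.integral_eq_sub_of_hasDerivAt (fun x _ => hasDerivAt_laplaceCDF δ x)
      (hcont.intervalIntegrable a b)]

theorem integral_laplaceMeasure {δ : ℝ} (hδ : 0 ≤ δ) (f : ℝ → ℝ) :
    ∫ t, f t ∂laplaceMeasure δ = ∫ t, f t * (δ / 2 * exp (-δ * |t|)) := by
  rw [laplaceMeasure, integral_withDensity_eq_integral_toReal_smul (by fun_prop)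
    (ae_of_all _ fun _ => ENNReal.ofReal_lt_top)]
  refine integral_congr_ae (ae_of_all _ fun t => ?_)
  dsimp only
  rw [ENNReal.toReal_ofReal (by positivity), smul_eq_mul, mul_comm]

/-- The paper's `𝓡`; `toNNReal` is harmless since the weights are nonnegative wherever it is
used. -/
noncomputable def pairMeasure (s : Finset ℝ) (ω : ℝ → ℝ) : Measure ℝ :=
  ∑ x ∈ s, ∑ y ∈ s, (ω x * ω y).toNNReal • Measure.dirac (y - x)

instance (s : Finset ℝ) (ω : ℝ → ℝ) : IsFiniteMeasure (pairMeasure s ω) := by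
  unfold pairMeasure; infer_instance

section PairMeasure

variable {s : Finset ℝ} {ω : ℝ → ℝ} (hω : ∀ x ∈ s, 0 ≤ ω x)
include hω

theorem integral_pairMeasure (f : ℝ → ℝ) :
    ∫ v, f v ∂pairMeasure s ω = ∑ x ∈ s, ∑ y ∈ s, ω x * ω y * f (y - x) := by
  have hint (x y : ℝ) : Integrable f ((ω x * ω y).toNNReal • Measure.dirac (y - x)) :=
    (integrable_dirac (by simp)).smul_measure ENNReal.coe_ne_top
  rw [pairMeasure, integral_finsetSum_measure fun x _ =>
    integrable_finsetSum_measure.2 fun y _ => hint x y]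
  refine Finset.sum_congr rfl fun x hx => ?_
  rw [integral_finsetSum_measure fun y _ => hint x y]
  refine Finset.sum_congr rfl fun y hy => ?_
  rw [integral_smul_nnreal_measure, integral_dirac, NNReal.smul_def, smul_eq_mul,
    Real.coe_toNNReal _ (mul_nonneg (hω x hx) (hω y hy))]

theorem pairMeasure_real_apply {S : Set ℝ} (hS : MeasurableSet S) :
    (pairMeasure s ω).real S = ∑ x ∈ s, ∑ y ∈ s, ω x * ω y * S.indicator 1 (y - x) := by
  rw [← integral_indicator_one hS, integral_pairMeasure hω]

theorem pairMeasure_real_univ : (pairMeasure s ω).real univ = (∑ x ∈ s, ω x) ^ 2 := by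
  simp [pairMeasure_real_apply hω MeasurableSet.univ, sq, Finset.sum_mul_sum]

theorem pairMeasure_real_singleton_zero : (pairMeasure s ω).real {0} = ∑ x ∈ s, ω x ^ 2 := by
  rw [pairMeasure_real_apply hω (measurableSet_singleton 0)]
  refine Finset.sum_congr rfl fun x hx => ?_
  simp [indicator_apply, sub_eq_zero, sq, hx]

theorem pairMeasure_real_neg {S : Set ℝ} (hS : MeasurableSet S) :
    (pairMeasure s ω).real (-S) = (pairMeasure s ω).real S := by
  have hneg (a : ℝ) : (-S).indicator (1 : ℝ → ℝ) a = S.indicator 1 (-a) := by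
    by_cases h : -a ∈ S <;> simp [h]
  rw [pairMeasure_real_apply hω hS.neg, pairMeasure_real_apply hω hS, Finset.sum_comm]
  simp only [hneg, neg_sub, mul_comm (ω _) (ω _)]

theorem pairMeasure_real_Iic_add_Iio_neg (u : ℝ) :
    (pairMeasure s ω).real (Iic u) + (pairMeasure s ω).real (Iio (-u)) = (∑ x ∈ s, ω x) ^ 2 := by
  rw [← pairMeasure_real_neg hω measurableSet_Iic, neg_Iic, ← pairMeasure_real_univ hω,
    ← compl_Iio, measureReal_compl measurableSet_Iio]
  ring

end PairMeasure

noncomputable def cumWeight {E : Set ℝ} (hfin : ∀ t : ℝ, (E ∩ Iic t).Finite) (ω : ℝ → ℝ)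
    (t : ℝ) : ℝ :=
  ∑ x ∈ (hfin t).toFinset, ω x

noncomputable def pairCorrelation {E : Set ℝ} (hfin : ∀ t : ℝ, (E ∩ Iic t).Finite) (ω : ℝ → ℝ)
    (t : ℝ) : Measure ℝ :=
  (cumWeight hfin ω t ^ 2)⁻¹.toNNReal • pairMeasure (hfin t).toFinset ω

instance {E : Set ℝ} (hfin : ∀ t : ℝ, (E ∩ Iic t).Finite) (ω : ℝ → ℝ) (t : ℝ) :
    IsFiniteMeasure (pairCorrelation hfin ω t) := by
  unfold pairCorrelation; infer_instance

section PairCorrelation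

variable {E : Set ℝ} {hfin : ∀ t : ℝ, (E ∩ Iic t).Finite} {ω : ℝ → ℝ}

local notation "ω̃" => cumWeight hfin ω

theorem mem_toFinset_Iic {t x : ℝ} : x ∈ (hfin t).toFinset ↔ x ∈ E ∧ x ≤ t := by simp

theorem toFinset_Iic_mono {s t : ℝ} (hst : s ≤ t) : (hfin s).toFinset ⊆ (hfin t).toFinset :=
  fun _ hx => mem_toFinset_Iic.2 ⟨(mem_toFinset_Iic.1 hx).1, (mem_toFinset_Iic.1 hx).2.trans hst⟩

theorem filter_toFinset_Iic (t a : ℝ) :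
    (hfin t).toFinset.filter (· ≤ a) = (hfin (min a t)).toFinset := by
  ext y
  simp only [Finset.mem_filter, mem_toFinset_Iic, le_min_iff]
  tauto

theorem cumWeight_sub_cumWeight {s t : ℝ} (hst : s ≤ t) :
    ω̃ t - ω̃ s = ∑ x ∈ (hfin t).toFinset \ (hfin s).toFinset, ω x :=
  (Finset.sum_sdiff_eq_sub (toFinset_Iic_mono hst)).symm

theorem isLittleO_sum_toFinset_Iic {f g : ℝ → ℝ} (hg : ∀ x ∈ E, 0 ≤ g x)
    (hfg : f =o[atTop ⊓ 𝓟 E] g)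
    (hsum : Tendsto (fun t => ∑ x ∈ (hfin t).toFinset, g x) atTop atTop) :
    (fun t => ∑ x ∈ (hfin t).toFinset, f x) =o[atTop] fun t => ∑ x ∈ (hfin t).toFinset, g x := by
  rw [isLittleO_iff]
  intro c hc
  obtain ⟨T, hT⟩ := eventually_atTop.1 (eventually_inf_principal.1 (hfg.def (half_pos hc)))
  filter_upwards [eventually_ge_atTop T,
    hsum.eventually_ge_atTop (2 / c * |∑ x ∈ (hfin T).toFinset, f x|)] with t hTt hlarge
  have hg_nonneg : 0 ≤ ∑ x ∈ (hfin t).toFinset, g x :=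
    Finset.sum_nonneg fun x hx => hg x (mem_toFinset_Iic.1 hx).1
  have hhead : |∑ x ∈ (hfin T).toFinset, f x| ≤ c / 2 * ∑ x ∈ (hfin t).toFinset, g x := by
    rw [div_mul_eq_mul_div, div_le_iff₀ hc] at hlarge
    linarith
  have htail : |∑ x ∈ (hfin t).toFinset \ (hfin T).toFinset, f x|
      ≤ c / 2 * ∑ x ∈ (hfin t).toFinset, g x := by
    refine (Finset.abs_sum_le_sum_abs _ _).trans ?_
    rw [Finset.mul_sum]
    refine (Finset.sum_le_sum fun x hx => ?_).trans
      (Finset.sum_le_sum_of_subset_of_nonneg Finset.sdiff_subset fun x hx _ =>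
        mul_nonneg (half_pos hc).le (hg x (mem_toFinset_Iic.1 hx).1))
    simp only [Finset.mem_sdiff, mem_toFinset_Iic, not_and, not_le] at hx
    have := hT x (hx.2 hx.1.1).le hx.1.1
    rwa [Real.norm_eq_abs, Real.norm_of_nonneg (hg x hx.1.1)] at this
  rw [Real.norm_of_nonneg hg_nonneg, ← Finset.sum_sdiff (toFinset_Iic_mono hTt)]
  exact (norm_add_le _ _).trans (by rw [Real.norm_eq_abs, Real.norm_eq_abs]; linarith)

theorem pairCorrelation_real_apply (t : ℝ) (S : Set ℝ) :
    (pairCorrelation hfin ω t).real S = (pairMeasure (hfin t).toFinset ω).real S / ω̃ t ^ 2 := by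
  rw [pairCorrelation, measureReal_nnreal_smul_apply, Real.coe_toNNReal _ (by positivity),
    div_eq_inv_mul]

variable (hω : ∀ x ∈ E, 0 ≤ ω x)
include hω

theorem integral_pairCorrelation (t : ℝ) (f : ℝ → ℝ) :
    ∫ v, f v ∂pairCorrelation hfin ω t =
      (∑ x ∈ (hfin t).toFinset, ∑ y ∈ (hfin t).toFinset, ω x * ω y * f (y - x)) / ω̃ t ^ 2 := by
  rw [pairCorrelation, integral_smul_nnreal_measure,
    integral_pairMeasure (fun x hx => hω x (mem_toFinset_Iic.1 hx).1), NNReal.smul_def,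
    Real.coe_toNNReal _ (by positivity), smul_eq_mul, div_eq_inv_mul]

theorem cumWeight_nonneg (t : ℝ) : 0 ≤ ω̃ t :=
  Finset.sum_nonneg fun x hx => hω x (mem_toFinset_Iic.1 hx).1

theorem le_cumWeight_sub {x s : ℝ} (hx : x ∈ E) (hs : 0 < s) : ω x ≤ ω̃ x - ω̃ (x - s) := by
  rw [cumWeight_sub_cumWeight (by linarith)]
  refine Finset.single_le_sum
    (fun y hy => hω y (mem_toFinset_Iic.1 (Finset.mem_sdiff.1 hy).1).1) ?_
  simp only [Finset.mem_sdiff, mem_toFinset_Iic]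
  exact ⟨⟨hx, le_rfl⟩, fun h => by linarith [h.2]⟩

theorem pairMeasure_real_Iic (t u : ℝ) :
    (pairMeasure (hfin t).toFinset ω).real (Iic u) =
      ∑ x ∈ (hfin t).toFinset, ω x * ω̃ (min (x + u) t) := by
  rw [pairMeasure_real_apply (fun x hx => hω x (mem_toFinset_Iic.1 hx).1) measurableSet_Iic]
  refine Finset.sum_congr rfl fun x _ => ?_
  rw [cumWeight, ← filter_toFinset_Iic, Finset.sum_filter, Finset.mul_sum]
  refine Finset.sum_congr rfl fun y _ => ?_
  by_cases h : y ≤ x + u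
  · simp [h, show y - x ≤ u by linarith]
  · simp [h, show ¬ y - x ≤ u by intro h'; exact h (by linarith)]

theorem pairMeasure_real_Iic_of_nonneg {u : ℝ} (hu : 0 ≤ u) (t : ℝ) :
    (pairMeasure (hfin t).toFinset ω).real (Iic u) =
      ∑ x ∈ (hfin (t - u)).toFinset, ω x * ω̃ (x + u) + ω̃ t * (ω̃ t - ω̃ (t - u)) := by
  have hsub := toFinset_Iic_mono (hfin := hfin) (show t - u ≤ t by linarith)
  rw [pairMeasure_real_Iic hω, ← Finset.sum_sdiff hsub, add_comm]
  congr 1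
  · refine Finset.sum_congr rfl fun x hx => ?_
    rw [min_eq_left (by linarith [(mem_toFinset_Iic.1 hx).2])]
  · rw [cumWeight_sub_cumWeight (by linarith), Finset.mul_sum]
    refine Finset.sum_congr rfl fun x hx => ?_
    simp only [Finset.mem_sdiff, mem_toFinset_Iic] at hx
    rw [min_eq_right (by linarith [not_le.1 fun h => hx.2 ⟨hx.1.1, h⟩]), mul_comm]

theorem two_mul_sum_mul_cumWeight (t : ℝ) :
    2 * ∑ x ∈ (hfin t).toFinset, ω x * ω̃ x = ω̃ t ^ 2 + ∑ x ∈ (hfin t).toFinset, ω x ^ 2 := by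
  have hω' : ∀ x ∈ (hfin t).toFinset, 0 ≤ ω x := fun x hx => hω x (mem_toFinset_Iic.1 hx).1
  have hIic : (pairMeasure (hfin t).toFinset ω).real (Iic 0) =
      ∑ x ∈ (hfin t).toFinset, ω x * ω̃ x := by
    rw [pairMeasure_real_Iic hω]
    refine Finset.sum_congr rfl fun x hx => ?_
    rw [add_zero, min_eq_left (mem_toFinset_Iic.1 hx).2]
  have hIci : (pairMeasure (hfin t).toFinset ω).real (Ici 0) =
      (pairMeasure (hfin t).toFinset ω).real (Iic 0) := by
    rw [← pairMeasure_real_neg hω' measurableSet_Iic, neg_Iic, neg_zero]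
  rw [← hIic, two_mul, ← pairMeasure_real_singleton_zero hω', cumWeight,
    ← pairMeasure_real_univ hω', ← Iic_union_Ici (a := (0 : ℝ)), ← Icc_self, ← Iic_inter_Ici,
    measureReal_union_add_inter measurableSet_Ici, hIci]

variable (htop : Tendsto (cumWeight hfin ω) atTop atTop)
include htop

theorem tendsto_sum_mul_cumWeight_atTop :
    Tendsto (fun t => ∑ x ∈ (hfin t).toFinset, ω x * ω̃ x) atTop atTop := by
  refine tendsto_atTop_mono (fun t => ?_)
    (((tendsto_pow_atTop two_ne_zero).comp htop).atTop_div_const two_pos)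
  have := two_mul_sum_mul_cumWeight (hfin := hfin) hω t
  have : 0 ≤ ∑ x ∈ (hfin t).toFinset, ω x ^ 2 := Finset.sum_nonneg fun x _ => sq_nonneg _
  show ω̃ t ^ 2 / 2 ≤ _
  linarith

variable {δ : ℝ} (hratio : ∀ s, Tendsto (fun t => cumWeight hfin ω (t + s) / cumWeight hfin ω t)
    atTop (𝓝 (exp (δ * s))))
include hratio

theorem isLittleO_cumWeight : ω =o[atTop ⊓ 𝓟 E] ω̃ := by
  rw [isLittleO_iff]
  intro c hc
  -- a window of length `s` carries asymptotically the fraction `1 - exp (-δ s)` of the weight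
  have hcont : Tendsto (fun s => exp (δ * -s)) (𝓝[>] 0) (𝓝 1) := by
    simpa using ((by fun_prop : Continuous fun s => exp (δ * -s)).tendsto 0).mono_left
      nhdsWithin_le_nhds
  obtain ⟨s, hs1, hs⟩ := ((hcont.eventually (lt_mem_nhds (show 1 - c / 2 < 1 by linarith))).and
    self_mem_nhdsWithin).exists
  have hwindow := (hratio (-s)).eventually
    (lt_mem_nhds (show exp (δ * -s) - c / 2 < exp (δ * -s) by linarith))
  rw [eventually_inf_principal]
  filter_upwards [hwindow, htop.eventually_gt_atTop 0] with x hx hpos hxE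
  rw [Real.norm_of_nonneg (hω x hxE), Real.norm_of_nonneg hpos.le]
  have hle := le_cumWeight_sub (hfin := hfin) hω hxE hs
  rw [lt_div_iff₀ hpos, ← sub_eq_add_neg] at hx
  nlinarith [mul_lt_mul_of_pos_right hs1 hpos]

theorem tendsto_sum_mul_cumWeight_div_sq :
    Tendsto (fun t => (∑ x ∈ (hfin t).toFinset, ω x * ω̃ x) / ω̃ t ^ 2) atTop (𝓝 (1 / 2)) := by
  set A := fun t => ∑ x ∈ (hfin t).toFinset, ω x * ω̃ x
  set D := fun t => ∑ x ∈ (hfin t).toFinset, ω x ^ 2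
  have hDA : D =o[atTop] A := isLittleO_sum_toFinset_Iic
    (fun x hx => mul_nonneg (hω x hx) (cumWeight_nonneg hω x))
    (((isBigO_refl ω _).mul_isLittleO (isLittleO_cumWeight hω htop hratio)).congr_left
      fun x => (sq (ω x)).symm) (tendsto_sum_mul_cumWeight_atTop hω htop)
  have hlim : Tendsto (fun t => (2 - D t / A t)⁻¹) atTop (𝓝 (2 - 0)⁻¹) :=
    (tendsto_const_nhds.sub hDA.tendsto_div_nhds_zero).inv₀ (by norm_num)
  rw [show (1 / 2 : ℝ) = (2 - 0)⁻¹ by norm_num]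
  refine hlim.congr' ?_
  filter_upwards [(tendsto_sum_mul_cumWeight_atTop hω htop).eventually_gt_atTop 0,
    htop.eventually_gt_atTop 0] with t hA hW
  show (2 - D t / A t)⁻¹ = A t / ω̃ t ^ 2
  have hW2 : ω̃ t ^ 2 = 2 * A t - D t := by
    linarith [two_mul_sum_mul_cumWeight (hfin := hfin) hω t]
  have hA' : A t ≠ 0 := hA.ne'
  have hW2' : 2 * A t - D t ≠ 0 := hW2 ▸ (pow_pos hW 2).ne'
  rw [hW2]
  field_simp

theorem tendsto_sum_mul_cumWeight_add_div_sq (u : ℝ) :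
    Tendsto (fun t => (∑ x ∈ (hfin t).toFinset, ω x * ω̃ (x + u)) / ω̃ t ^ 2) atTop
      (𝓝 (exp (δ * u) / 2)) := by
  set A := fun t => ∑ x ∈ (hfin t).toFinset, ω x * ω̃ x
  set R := fun t => ∑ x ∈ (hfin t).toFinset, ω x * (ω̃ (x + u) - exp (δ * u) * ω̃ x)
  have hW := htop.eventually_gt_atTop 0
  have hshift : (fun x => ω̃ (x + u) - exp (δ * u) * ω̃ x) =o[atTop] ω̃ := by
    refine (isLittleO_iff_tendsto' (hW.mono fun x hx h => absurd h hx.ne')).2 ?_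
    have := (hratio u).sub_const (exp (δ * u))
    rw [sub_self] at this
    refine this.congr' (hW.mono fun x hx => ?_)
    field_simp
  have hRA : R =o[atTop] A := isLittleO_sum_toFinset_Iic
    (fun x hx => mul_nonneg (hω x hx) (cumWeight_nonneg hω x))
    ((isBigO_refl ω _).mul_isLittleO (hshift.mono inf_le_left))
    (tendsto_sum_mul_cumWeight_atTop hω htop)
  have hhalf := tendsto_sum_mul_cumWeight_div_sq hω htop hratio
  have hlim := (hhalf.const_mul (exp (δ * u))).add (hRA.tendsto_div_nhds_zero.mul hhalf)
  rw [show exp (δ * u) / 2 = exp (δ * u) * (1 / 2) + 0 * (1 / 2) by ring]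
  refine hlim.congr' ?_
  filter_upwards [(tendsto_sum_mul_cumWeight_atTop hω htop).eventually_gt_atTop 0]
    with t hA
  have hsplit : ∑ x ∈ (hfin t).toFinset, ω x * ω̃ (x + u) = exp (δ * u) * A t + R t := by
    simp only [A, R, Finset.mul_sum, ← Finset.sum_add_distrib]
    exact Finset.sum_congr rfl fun x _ => by ring
  show exp (δ * u) * (A t / ω̃ t ^ 2) + R t / A t * (A t / ω̃ t ^ 2) = _ / ω̃ t ^ 2
  have hA' : A t ≠ 0 := hA.ne'
  rw [hsplit]
  field_simp

theorem tendsto_pairMeasure_Iic_div_sq {u : ℝ} (hu : 0 ≤ u) :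
    Tendsto (fun t => (pairMeasure (hfin t).toFinset ω).real (Iic u) / ω̃ t ^ 2) atTop
      (𝓝 (laplaceCDF δ u)) := by
  have hshift : Tendsto (fun t => t + -u) atTop atTop :=
    tendsto_atTop_add_const_right _ _ tendsto_id
  have hback := hratio (-u)
  have hlim := (((tendsto_sum_mul_cumWeight_add_div_sq hω htop hratio u).comp hshift).mul
    (hback.pow 2)).add ((tendsto_const_nhds (x := (1 : ℝ))).sub hback)
  have hvalue : exp (δ * u) / 2 * exp (δ * -u) ^ 2 + (1 - exp (δ * -u)) = laplaceCDF δ u := by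
    have : exp (δ * u) * exp (δ * -u) = 1 := by rw [← exp_add]; simp
    rw [laplaceCDF, if_pos hu, neg_mul, ← mul_neg]
    linear_combination (exp (δ * -u) / 2) * this
  rw [← hvalue]
  refine hlim.congr' ?_
  filter_upwards [htop.eventually_gt_atTop 0, hshift.eventually (htop.eventually_gt_atTop 0)]
    with t ht htu
  simp only [Function.comp_apply, ← sub_eq_add_neg] at htu ⊢
  rw [pairMeasure_real_Iic_of_nonneg hω hu t]
  field_simp

theorem tendsto_pairCorrelation_Iic (u : ℝ) :
    Tendsto (fun t => (pairCorrelation hfin ω t).real (Iic u)) atTop (𝓝 (laplaceCDF δ u)) := by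
  have hnonneg {v : ℝ} (hv : 0 ≤ v) :
      Tendsto (fun t => (pairCorrelation hfin ω t).real (Iic v)) atTop (𝓝 (laplaceCDF δ v)) := by
    simpa only [pairCorrelation_real_apply] using tendsto_pairMeasure_Iic_div_sq hω htop hratio hv
  rcases le_or_gt 0 u with hu | hu
  · exact hnonneg hu
  -- reflect `Iic u` to `Ici (-u)` and approach `-u > 0` from the left
  have hIio := tendsto_measureReal_Iio_of_tendsto_measureReal_Iic
    (continuous_laplaceCDF δ).continuousWithinAt (eventually_nhdsWithin_of_eventually_nhds
      ((eventually_gt_nhds (neg_pos.2 hu)).mono fun v hv => hnonneg hv.le))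
  have hvalue : 1 - laplaceCDF δ (-u) = laplaceCDF δ u := by
    rw [laplaceCDF, laplaceCDF, if_pos (neg_nonneg.2 hu.le), if_neg (not_le.2 hu), neg_mul_neg]
    ring
  rw [← hvalue]
  refine (tendsto_const_nhds.sub hIio).congr' ?_
  filter_upwards [htop.eventually_gt_atTop 0] with t ht
  have := pairMeasure_real_Iic_add_Iio_neg
    (fun x hx => hω x (mem_toFinset_Iic.1 hx).1) (s := (hfin t).toFinset) u
  rw [← cumWeight] at this
  rw [pairCorrelation_real_apply, pairCorrelation_real_apply, eq_div_iff (by positivity)]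
  field_simp
  linarith

theorem tendsto_pairCorrelation_Ioc {a b : ℝ} (hab : a ≤ b) :
    Tendsto (fun t => (pairCorrelation hfin ω t).real (Ioc a b)) atTop
      (𝓝 (laplaceCDF δ b - laplaceCDF δ a)) := by
  have hdiff : Ioc a b = Iic b \ Iic a := by ext; simp [and_comm]
  refine ((tendsto_pairCorrelation_Iic hω htop hratio b).sub
    (tendsto_pairCorrelation_Iic hω htop hratio a)).congr fun t => ?_
  rw [hdiff, measureReal_sdiff (Iic_subset_Iic.2 hab) measurableSet_Iic]

end PairCorrelation

theorem tendsto_mul_rpow_mul_exp_atTop {c δ : ℝ} (α : ℝ) (hc : 0 < c) (hδ : 0 < δ) :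
    Tendsto (fun t : ℝ => c * t ^ α * exp (δ * t)) atTop atTop := by
  refine ((tendsto_exp_mul_div_rpow_atTop (-α) δ hδ).const_mul_atTop hc).congr' ?_
  filter_upwards [eventually_gt_atTop 0] with t ht
  rw [rpow_neg ht.le, div_inv_eq_mul]
  ring

theorem tendsto_mul_rpow_mul_exp_add_div {c : ℝ} (hc : c ≠ 0) (α δ s : ℝ) :
    Tendsto (fun t : ℝ => c * (t + s) ^ α * exp (δ * (t + s)) / (c * t ^ α * exp (δ * t)))
      atTop (𝓝 (exp (δ * s))) := by
  have hbase : Tendsto (fun t : ℝ => (1 + s / t) ^ α) atTop (𝓝 1) := by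
    have h : Tendsto (fun t : ℝ => 1 + s / t) atTop (𝓝 (1 + 0)) :=
      (tendsto_const_nhds.div_atTop tendsto_id).const_add 1
    rw [add_zero] at h
    simpa [Function.comp_def] using
      (continuousAt_rpow_const 1 α (Or.inl one_ne_zero)).tendsto.comp h
  have h := hbase.mul_const (exp (δ * s))
  rw [one_mul] at h
  refine h.congr' ?_
  filter_upwards [eventually_gt_atTop 0, eventually_gt_atTop (-s)] with t ht hts
  have hts : 0 < t + s := by linarith
  rw [show 1 + s / t = (t + s) / t by field_simp, div_rpow hts.le ht.le, mul_add, exp_add]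
  have := rpow_pos_of_pos ht α
  field_simp

theorem tendsto_add_div_of_isEquivalent_rpow_mul_exp {u : ℝ → ℝ} {c α δ : ℝ} (hc : c ≠ 0)
    (hu : u ~[atTop] fun t => c * t ^ α * exp (δ * t)) (s : ℝ) :
    Tendsto (fun t => u (t + s) / u t) atTop (𝓝 (exp (δ * s))) :=
  ((hu.comp_tendsto (tendsto_atTop_add_const_right _ s tendsto_id)).div hu).symm.tendsto_nhds
    (tendsto_mul_rpow_mul_exp_add_div hc α δ s)

theorem pair_correlation_PA_general
    (E : Set ℝ) (hfin : ∀ t : ℝ, (E ∩ Set.Iic t).Finite)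
    (ω : ℝ → ℝ) (hω : ∀ x ∈ E, 0 < ω x)
    (c δ α : ℝ) (hc : 0 < c) (hδ : 0 < δ)
    (hPA : Tendsto
      (fun t : ℝ => (∑ x ∈ (hfin t).toFinset, ω x) / (c * t ^ α * Real.exp (δ * t)))
      atTop (nhds 1)) :
    ∀ f : ℝ → ℝ, Continuous f → HasCompactSupport f →
      Tendsto (fun N : ℕ =>
          (∑ x ∈ (hfin N).toFinset, ∑ y ∈ (hfin N).toFinset, ω x * ω y * f (y - x)) /
            (∑ x ∈ (hfin N).toFinset, ω x) ^ 2)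
        atTop (nhds (∫ t : ℝ, f t * (δ / 2 * Real.exp (-δ * |t|)))) := by
  intro f hf hfs
  have hω' : ∀ x ∈ E, 0 ≤ ω x := fun x hx => (hω x hx).le
  have hequiv : cumWeight hfin ω ~[atTop] fun t => c * t ^ α * exp (δ * t) :=
    isEquivalent_of_tendsto_one hPA
  have htop := hequiv.symm.tendsto_atTop (tendsto_mul_rpow_mul_exp_atTop α hc hδ)
  have hratio := tendsto_add_div_of_isEquivalent_rpow_mul_exp hc.ne' hequiv
  have hIoc (a b : ℝ) (hab : a ≤ b) :
      Tendsto (fun N : ℕ => (pairCorrelation hfin ω N).real (Ioc a b)) atTop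
        (𝓝 ((laplaceMeasure δ).real (Ioc a b))) := by
    rw [laplaceMeasure_real_Ioc hδ.le hab]
    exact (tendsto_pairCorrelation_Ioc hω' htop hratio hab).comp tendsto_natCast_atTop_atTop
  simpa only [integral_pairCorrelation hω', integral_laplaceMeasure hδ.le, cumWeight] using
    tendsto_integral_of_tendsto_measureReal_Ioc hIoc hf hfs

/-- Theorem 3.3: under assumption (PA), the renormalised pair correlation measures
(for scaling `ψ = 1`) weak-star converge to `(δ/2) e^{-δ|t|} dt`. -/
theorem pair_correlation_PA
    (E : Set ℝ) (hE : E ⊆ Set.Ici 0) (hfin : ∀ t : ℝ, (E ∩ Set.Iic t).Finite)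
    (ω : ℝ → ℝ) (hω : ∀ x ∈ E, 0 < ω x)
    (c δ α : ℝ) (hc : 0 < c) (hδ : 0 < δ)
    (hPA : Tendsto
      (fun t : ℝ => (∑ x ∈ (hfin t).toFinset, ω x) / (c * t ^ α * Real.exp (δ * t)))
      atTop (nhds 1)) :
    ∀ f : ℝ → ℝ, Continuous f → HasCompactSupport f →
      Tendsto (fun N : ℕ =>
          (∑ x ∈ (hfin N).toFinset, ∑ y ∈ (hfin N).toFinset, ω x * ω y * f (y - x)) /
            (∑ x ∈ (hfin N).toFinset, ω x) ^ 2)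
        atTop (nhds (∫ t : ℝ, f t * (δ / 2 * Real.exp (-δ * |t|)))) :=
  pair_correlation_PA_general E hfin ω hω c δ α hc hδ hPA
end

section
/- Let 𝓔 = {ln n : n ∈ ℕ, n ≥ 1} with weight ω ≡ 1. Then the growth function satisfies 𝓝(t) = Card{n ≥ 1 : ln n ≤ t} = e^t (1 + O(e^{-t})); more precisely 𝓝(t) = ⌊e^t⌋ for t ≥ 0, so |𝓝(t) - e^t| ≤ 1. Consequently, for all reals a < b, Card{(m,n) ∈ ℕ² : 1 ≤ m,n ≤ e^N, a ≤ ln n - ln m ≤ b} ~ (1/2) ⌊e^N⌋² ∫_a^b e^{-|t|} dt as N → ∞. -/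
open Filter Real

/-!
Writing `A = e^a`, `B = e^b` and `M = ⌊e^N⌋`, the pairs counted are the lattice points
`(m, n) ∈ [1, M]²` with `A m ≤ n ≤ B m`. For each `m` the admissible `n` form an interval of
length `min(M, B m) - min(M, A m)` up to an error `1`, and summing over `m` compares the count,
up to `O(M)`, with `M²` times the area of the part of the unit square between the lines
`y = A x` and `y = B x`. That area is `½ ∫_a^b e^{-|t|} dt`.
-/

open Finset

/-- The area of `{(x, y) ∈ [0, 1]² | y ≤ C x}` for `C ≥ 0`. -/
noncomputable def slopeArea (C : ℝ) : ℝ := if C ≤ 1 then C / 2 else 1 - 1 / (2 * C)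

theorem integral_min_mul {L : ℝ} (hL : 0 ≤ L) (C : ℝ) :
    ∫ x in (0 : ℝ)..L, min L (C * x) = L ^ 2 * slopeArea C := by
  unfold slopeArea
  split_ifs with hC
  · have hline : ∀ x ∈ Set.uIcc 0 L, min L (C * x) = C * x := fun x hx => by
      rw [Set.uIcc_of_le hL] at hx
      exact min_eq_right (by nlinarith [hx.1, hx.2])
    rw [intervalIntegral.integral_congr hline, intervalIntegral.integral_const_mul, integral_id]
    ring
  · have hint : ∀ u v, IntervalIntegrable (fun x => min L (C * x)) MeasureTheory.volume u v :=
      fun u v => (continuous_const.min (continuous_const.mul continuous_id)).intervalIntegrable u v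
    have hC0 : 0 < C := by linarith
    have hLC : L / C ≤ L := div_le_self hL (by linarith)
    have hline : ∀ x ∈ Set.uIcc 0 (L / C), min L (C * x) = C * x := fun x hx => by
      rw [Set.uIcc_of_le (by positivity)] at hx
      exact min_eq_right (by rw [← le_div_iff₀' hC0]; exact hx.2)
    have hflat : ∀ x ∈ Set.uIcc (L / C) L, min L (C * x) = L := fun x hx => by
      rw [Set.uIcc_of_le hLC] at hx
      exact min_eq_left (by rw [← div_le_iff₀' hC0]; exact hx.1)
    rw [← intervalIntegral.integral_add_adjacent_intervals (hint 0 (L / C)) (hint (L / C) L),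
      intervalIntegral.integral_congr hline, intervalIntegral.integral_congr hflat,
      intervalIntegral.integral_const_mul, integral_id, intervalIntegral.integral_const,
      smul_eq_mul]
    field_simp
    ring

/-- The sums of `f x = min M (C x)` over the left and right endpoints of `[i, i + 1]` bracket
its integral over `[0, M]`, and they differ by `f M - f 0 ≤ M`. -/
theorem abs_sum_min_mul_sub_le {C : ℝ} (hC : 0 ≤ C) (M : ℕ) :
    |∑ m ∈ Icc 1 M, min (M : ℝ) (C * m) - M ^ 2 * slopeArea C| ≤ M := by
  set f : ℝ → ℝ := fun x => min (M : ℝ) (C * x)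
  have hmono : MonotoneOn f (Set.Icc 0 (0 + M)) :=
    fun x _ y _ hxy => min_le_min_left _ (mul_le_mul_of_nonneg_left hxy hC)
  have hshift : ∑ m ∈ Icc 1 M, f m = ∑ i ∈ range M, f (0 + ↑(i + 1)) := by
    rw [← Ico_add_one_right_eq_Icc, range_eq_Ico, ← sum_Ico_add' _ 0 M 1]
    simp
  have htelescope :
      ∑ i ∈ range M, f (0 + ↑(i + 1)) = ∑ i ∈ range M, f (0 + i) + f M - f 0 := by
    have := sum_range_sub (fun i : ℕ => f i) M
    rw [sum_sub_distrib] at this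
    simp only [zero_add, Nat.cast_add, Nat.cast_one, Nat.cast_zero] at this ⊢
    linarith
  have hlower := hmono.integral_le_sum
  have hupper := hmono.sum_le_integral
  have hfM : f M ≤ M := min_le_left _ _
  have hf0 : f 0 = 0 := by simp [f]
  rw [zero_add, integral_min_mul (Nat.cast_nonneg M)] at hlower hupper
  rw [hshift, abs_le]
  constructor <;> linarith

theorem abs_card_Icc_ceil_floor_sub_le {u v : ℝ} (hu : 0 ≤ u) (huv : u ≤ v) :
    |(#(Icc ⌈u⌉₊ ⌊v⌋₊) : ℝ) - (v - u)| ≤ 1 := by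
  have hle : ⌈u⌉₊ ≤ ⌊v⌋₊ + 1 := (Nat.ceil_le_floor_add_one u).trans (by gcongr)
  rw [Nat.card_Icc, Nat.cast_sub hle, Nat.cast_add, Nat.cast_one, abs_le]
  have := Nat.le_ceil u
  have := Nat.ceil_lt_add_one hu
  have := Nat.floor_le (hu.trans huv)
  have := Nat.lt_floor_add_one v
  constructor <;> linarith

theorem abs_card_filter_Icc_sub_le (M : ℕ) {u v : ℝ} (hu : 0 < u) (huv : u ≤ v) :
    |(#((Icc 1 M).filter fun n : ℕ => u ≤ n ∧ (n : ℝ) ≤ v) : ℝ) -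
      (min (M : ℝ) v - min (M : ℝ) u)| ≤ 1 := by
  rcases le_or_gt u M with huM | hMu
  · have hfilter : ((Icc 1 M).filter fun n : ℕ => u ≤ n ∧ (n : ℝ) ≤ v) =
        Icc ⌈u⌉₊ ⌊min (M : ℝ) v⌋₊ := by
      ext n
      rw [mem_filter, mem_Icc, mem_Icc, Nat.ceil_le,
        Nat.le_floor_iff (le_min (Nat.cast_nonneg M) (hu.le.trans huv)), le_min_iff, Nat.cast_le]
      constructor
      · rintro ⟨⟨-, hnM⟩, hun, hnv⟩
        exact ⟨hun, hnM, hnv⟩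
      · rintro ⟨hun, hnM, hnv⟩
        exact ⟨⟨Nat.cast_pos.1 (hu.trans_le hun), hnM⟩, hun, hnv⟩
    rw [hfilter, min_eq_right huM]
    exact abs_card_Icc_ceil_floor_sub_le hu.le (le_min huM huv)
  · have hfilter : ((Icc 1 M).filter fun n : ℕ => u ≤ n ∧ (n : ℝ) ≤ v) = ∅ := by
      refine filter_false_of_mem fun n hn ⟨hun, _⟩ => ?_
      have : (n : ℝ) ≤ M := by exact_mod_cast (mem_Icc.1 hn).2
      linarith
    rw [hfilter, min_eq_left hMu.le, min_eq_left (hMu.le.trans huv)]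
    simp

noncomputable def pairCount (A B : ℝ) (M : ℕ) : ℕ :=
  #{p ∈ Icc 1 M ×ˢ Icc 1 M | A * p.1 ≤ p.2 ∧ (p.2 : ℝ) ≤ B * p.1}

theorem pairCount_eq_sum (A B : ℝ) (M : ℕ) :
    pairCount A B M =
      ∑ m ∈ Icc 1 M, #((Icc 1 M).filter fun n : ℕ => A * m ≤ n ∧ (n : ℝ) ≤ B * m) := by
  simp_rw [pairCount, card_filter]
  rw [sum_product]

theorem abs_pairCount_sub_le {A B : ℝ} (hA : 0 < A) (hAB : A ≤ B) (M : ℕ) :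
    |(pairCount A B M : ℝ) - M ^ 2 * (slopeArea B - slopeArea A)| ≤ 3 * M := by
  have hfibers : |(pairCount A B M : ℝ) -
      ∑ m ∈ Icc 1 M, (min (M : ℝ) (B * m) - min (M : ℝ) (A * m))| ≤ M := by
    rw [pairCount_eq_sum, Nat.cast_sum, ← sum_sub_distrib]
    calc _ ≤ ∑ m ∈ Icc 1 M, (1 : ℝ) := by
          refine (abs_sum_le_sum_abs _ _).trans (sum_le_sum fun m hm => ?_)
          have hm : (0 : ℝ) < m := by exact_mod_cast (mem_Icc.1 hm).1
          exact abs_card_filter_Icc_sub_le M (by positivity) (by gcongr)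
      _ = M := by simp
  have hB := abs_sum_min_mul_sub_le (hA.le.trans hAB) M
  have hA := abs_sum_min_mul_sub_le hA.le M
  rw [sum_sub_distrib] at hfibers
  rw [abs_le] at *
  constructor <;> linarith

theorem tendsto_pairCount_div_sq {A B : ℝ} (hA : 0 < A) (hAB : A ≤ B) :
    Tendsto (fun M : ℕ => (pairCount A B M : ℝ) / M ^ 2) atTop
      (nhds (slopeArea B - slopeArea A)) := by
  rw [tendsto_iff_norm_sub_tendsto_zero]
  refine squeeze_zero_norm' ?_ (tendsto_const_div_atTop_nhds_zero_nat 3)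
  filter_upwards [eventually_gt_atTop 0] with M hM
  have hM : (0 : ℝ) < M := Nat.cast_pos.2 hM
  have hdiv : (pairCount A B M : ℝ) / M ^ 2 - (slopeArea B - slopeArea A)
      = ((pairCount A B M : ℝ) - M ^ 2 * (slopeArea B - slopeArea A)) / M ^ 2 := by
    field_simp
  rw [norm_norm, Real.norm_eq_abs, hdiv, abs_div, abs_of_pos (a := (M : ℝ) ^ 2) (by positivity),
    div_le_div_iff₀ (by positivity) hM]
  nlinarith [abs_pairCount_sub_le hA hAB M]

theorem integral_zero_exp_neg_abs (x : ℝ) :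
    ∫ t in (0 : ℝ)..x, exp (-|t|) = 2 * slopeArea (exp x) - 1 := by
  rcases le_or_gt x 0 with hx | hx
  · have hneg : ∀ t ∈ Set.uIcc 0 x, exp (-|t|) = exp t := fun t ht => by
      rw [Set.uIcc_of_ge hx] at ht
      rw [abs_of_nonpos ht.2, neg_neg]
    rw [intervalIntegral.integral_congr hneg, integral_exp, slopeArea,
      if_pos (exp_le_one_iff.2 hx), exp_zero]
    ring
  · have hpos : ∀ t ∈ Set.uIcc 0 x, exp (-|t|) = exp (-t) := fun t ht => by
      rw [Set.uIcc_of_le hx.le] at ht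
      rw [abs_of_nonneg ht.1]
    rw [intervalIntegral.integral_congr hpos, intervalIntegral.integral_comp_neg (fun t => exp t),
      integral_exp, slopeArea, if_neg (not_le.2 (one_lt_exp_iff.2 hx)), neg_zero, exp_zero, exp_neg]
    field_simp
    ring

theorem intervalIntegrable_exp_neg_abs (a b : ℝ) :
    IntervalIntegrable (fun t => exp (-|t|)) MeasureTheory.volume a b :=
  (continuous_exp.comp continuous_abs.neg).intervalIntegrable a b

theorem integral_exp_neg_abs (a b : ℝ) :
    ∫ t in a..b, exp (-|t|) = 2 * (slopeArea (exp b) - slopeArea (exp a)) := by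
  rw [← intervalIntegral.integral_interval_sub_left (intervalIntegrable_exp_neg_abs 0 b)
      (intervalIntegrable_exp_neg_abs 0 a),
    integral_zero_exp_neg_abs, integral_zero_exp_neg_abs]
  ring

theorem natCard_setOf_log_le (t : ℝ) :
    Nat.card {n : ℕ | 1 ≤ n ∧ log n ≤ t} = ⌊exp t⌋₊ := by
  have hset : {n : ℕ | 1 ≤ n ∧ log n ≤ t} = ↑(Icc 1 ⌊exp t⌋₊) := by
    ext n
    simp only [Set.mem_ofPred_eq, coe_Icc, Set.mem_Icc, and_congr_right_iff]
    intro hn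
    rw [log_le_iff_le_exp (by exact_mod_cast hn), Nat.le_floor_iff (exp_pos t).le]
  rw [hset, Nat.card_coe_set_eq, Set.ncard_coe_finset, Nat.card_Icc, Nat.add_sub_cancel]

theorem le_log_sub_log_iff {x y : ℝ} (hx : 0 < x) (hy : 0 < y) (c : ℝ) :
    c ≤ log y - log x ↔ exp c * x ≤ y := by
  rw [← log_div hy.ne' hx.ne', le_log_iff_exp_le (div_pos hy hx), le_div_iff₀ hx]

theorem log_sub_log_le_iff {x y : ℝ} (hx : 0 < x) (hy : 0 < y) (c : ℝ) :
    log y - log x ≤ c ↔ y ≤ exp c * x := by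
  rw [← log_div hy.ne' hx.ne', log_le_iff_le_exp (div_pos hy hx), div_le_iff₀ hx]

theorem natCard_setOf_log_sub_log_eq_pairCount (a b : ℝ) {X : ℝ} (hX : 0 ≤ X) :
    Nat.card {p : ℕ × ℕ | 1 ≤ p.1 ∧ 1 ≤ p.2 ∧ (p.1 : ℝ) ≤ X ∧ (p.2 : ℝ) ≤ X ∧
      a ≤ log p.2 - log p.1 ∧ log p.2 - log p.1 ≤ b} = pairCount (exp a) (exp b) ⌊X⌋₊ := by
  rw [pairCount, ← Nat.card_eq_finsetCard]
  congr 2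
  ext ⟨m, n⟩
  simp only [Set.mem_ofPred_eq, coe_filter, mem_product, mem_Icc, Nat.le_floor_iff hX]
  constructor
  · rintro ⟨hm, hn, hmX, hnX, ha, hb⟩
    exact ⟨⟨⟨hm, hmX⟩, hn, hnX⟩,
      (le_log_sub_log_iff (Nat.cast_pos.2 hm) (Nat.cast_pos.2 hn) a).1 ha,
      (log_sub_log_le_iff (Nat.cast_pos.2 hm) (Nat.cast_pos.2 hn) b).1 hb⟩
  · rintro ⟨⟨⟨hm, hmX⟩, hn, hnX⟩, ha, hb⟩
    exact ⟨hm, hn, hmX, hnX,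
      (le_log_sub_log_iff (Nat.cast_pos.2 hm) (Nat.cast_pos.2 hn) a).2 ha,
      (log_sub_log_le_iff (Nat.cast_pos.2 hm) (Nat.cast_pos.2 hn) b).2 hb⟩

/-- The archetypical example `𝓔 = {ln n : n ≥ 1}`: the growth function is
`⌊e^t⌋` for `t ≥ 0`, hence `e^t(1 + O(e^{-t}))`, and the pair correlation count
satisfies Corollary 1.2 with `δ = 1`. -/
theorem log_integers_pair_correlation :
    (∀ t : ℝ, 0 ≤ t →
      Nat.card {n : ℕ | 1 ≤ n ∧ Real.log n ≤ t} = ⌊Real.exp t⌋₊ ∧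
      |(⌊Real.exp t⌋₊ : ℝ) - Real.exp t| ≤ 1) ∧
    ∀ a b : ℝ, a < b →
      Tendsto (fun N : ℕ =>
          (Nat.card {p : ℕ × ℕ | 1 ≤ p.1 ∧ 1 ≤ p.2 ∧
              (p.1 : ℝ) ≤ Real.exp N ∧ (p.2 : ℝ) ≤ Real.exp N ∧
              a ≤ Real.log p.2 - Real.log p.1 ∧ Real.log p.2 - Real.log p.1 ≤ b} : ℝ) /
            (1 / 2 * (⌊Real.exp N⌋₊ : ℝ) ^ 2 * ∫ t in a..b, Real.exp (-|t|)))
        atTop (nhds 1) := by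
  refine ⟨fun t _ => ⟨natCard_setOf_log_le t, abs_le.2 ⟨?_, ?_⟩⟩, fun a b hab => ?_⟩
  · linarith [Nat.lt_floor_add_one (exp t)]
  · linarith [Nat.floor_le (exp_pos t).le]
  have hI : 0 < ∫ t in a..b, exp (-|t|) :=
    intervalIntegral.intervalIntegral_pos_of_pos_on (intervalIntegrable_exp_neg_abs a b)
      (fun t _ => exp_pos _) hab
  rw [integral_exp_neg_abs] at hI ⊢
  set L := slopeArea (exp b) - slopeArea (exp a)
  have hfloor : Tendsto (fun N : ℕ => ⌊exp N⌋₊) atTop atTop :=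
    tendsto_nat_floor_atTop.comp (tendsto_exp_atTop.comp tendsto_natCast_atTop_atTop)
  have hlim :=
    ((tendsto_pairCount_div_sq (exp_pos a) (exp_le_exp.2 hab.le)).comp hfloor).div_const L
  rw [div_self (by linarith)] at hlim
  refine hlim.congr fun N => ?_
  rw [Function.comp_apply, natCard_setOf_log_sub_log_eq_pairCount a b (exp_pos N).le, div_div]
  ring
end
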